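/- Let K be an algebraically closed field, L a Lie algebra over K, and M, N finite-dimensional irreducible Lie modules over L. Equip the tensor product M ⊗ N with the Lie module structure ⁅x, m ⊗ n⁆ = ⁅x, m⁆ ⊗ n + m ⊗ ⁅x, n⁆. Then the maximal trivial submodule {v ∈ M ⊗ N : ⁅x, v⁆ = 0 for all x ∈ L} has dimension at most 1, and it is nonzero if and only if there exists a nonzero invariant bilinear form B : M × N → K. -/
import Mathlib

open scoped TensorProduct

open Module LieModule LinearMap

section Aux

variable {K : Type*} [Field K]
  {L : Type*} [LieRing L] [LieAlgebra K L]
  {M N : Type*}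
  [AddCommGroup M] [Module K M] [LieRingModule L M] [LieModule K L M]
  [AddCommGroup N] [Module K N] [LieRingModule L N] [LieModule K L N]

variable (K M N) in
/-- The canonical equivalence `M ⊗ N ≃ Hom(M*, N)` for finite dimensional `M`. -/
noncomputable def phiE [FiniteDimensional K M] :
    M ⊗[K] N ≃ₗ[K] (Module.Dual K M →ₗ[K] N) :=
  (TensorProduct.congr (Module.evalEquiv K M) (LinearEquiv.refl K N)).trans
    (dualTensorHomEquiv K (Module.Dual K M) N)

lemma phiE_tmul [FiniteDimensional K M] (m : M) (n : N) (f : Module.Dual K M) :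
    phiE K M N (m ⊗ₜ[K] n) f = f m • n := by
  simp [phiE, dualTensorHomEquiv]

lemma phiE_lie [FiniteDimensional K M] (x : L) (t : M ⊗[K] N) (f : Module.Dual K M) :
    phiE K M N ⁅x, t⁆ f
      = phiE K M N t (f ∘ₗ (LieModule.toEnd K L M x : M →ₗ[K] M))
        + ⁅x, phiE K M N t f⁆ := by
  induction t using TensorProduct.induction_on with
  | zero => simp
  | tmul m n =>
      rw [TensorProduct.LieModule.lie_tmul_right]
      simp only [map_add, LinearMap.add_apply, phiE_tmul, LinearMap.coe_comp,
        Function.comp_apply, LieModule.toEnd_apply_apply, lie_smul]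
  | add a b ha hb =>
      simp only [lie_add, map_add, LinearMap.add_apply, ha, hb]
      abel

lemma mem_maxTriv_iff [FiniteDimensional K M] (t : M ⊗[K] N) :
    t ∈ LieModule.maxTrivSubmodule K L (M ⊗[K] N) ↔
      ∀ (x : L) (f : Module.Dual K M),
        phiE K M N t (f ∘ₗ (LieModule.toEnd K L M x : M →ₗ[K] M))
          + ⁅x, phiE K M N t f⁆ = 0 := by
  rw [LieModule.mem_maxTrivSubmodule]
  constructor
  · intro h x f
    have h1 := phiE_lie x t f
    rw [h x] at h1
    simpa using h1.symm
  · intro h x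
    have : phiE K M N ⁅x, t⁆ = 0 := by
      ext f
      rw [phiE_lie x t f, h x f]
      rfl
    exact (LinearEquiv.map_eq_zero_iff (phiE K M N)).mp this

lemma phiE_surj [FiniteDimensional K M]
    (hNirr : ∀ Q : LieSubmodule K L N, Q = ⊥ ∨ Q = ⊤)
    {t : M ⊗[K] N} (ht : t ∈ LieModule.maxTrivSubmodule K L (M ⊗[K] N)) (ht0 : t ≠ 0) :
    Function.Surjective (phiE K M N t) := by
  have hinv := (mem_maxTriv_iff t).mp ht
  let Q : LieSubmodule K L N :=
    { LinearMap.range (phiE K M N t) with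
      lie_mem := by
        rintro x n ⟨f, rfl⟩
        refine ⟨-(f ∘ₗ (LieModule.toEnd K L M x : M →ₗ[K] M)), ?_⟩
        rw [map_neg]
        exact neg_eq_of_add_eq_zero_right (hinv x f) }
  rcases hNirr Q with hQ | hQ
  · exfalso
    apply ht0
    apply (LinearEquiv.map_eq_zero_iff (phiE K M N)).mp
    ext f
    have hf : phiE K M N t f ∈ Q := ⟨f, rfl⟩
    rw [hQ] at hf
    simpa using hf
  · intro n
    have hn : n ∈ Q := by rw [hQ]; exact LieSubmodule.mem_top n
    exact hn

lemma comm_lie (x : L) (t : M ⊗[K] N) :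
    TensorProduct.comm K M N ⁅x, t⁆ = ⁅x, TensorProduct.comm K M N t⁆ := by
  induction t using TensorProduct.induction_on with
  | zero => simp
  | tmul m n =>
      rw [TensorProduct.LieModule.lie_tmul_right]
      simp only [map_add, TensorProduct.comm_tmul, TensorProduct.LieModule.lie_tmul_right]
      abel
  | add a b ha hb => simp only [lie_add, map_add, ha, hb]

lemma comm_mem_maxTriv {t : M ⊗[K] N}
    (ht : t ∈ LieModule.maxTrivSubmodule K L (M ⊗[K] N)) :
    TensorProduct.comm K M N t ∈ LieModule.maxTrivSubmodule K L (N ⊗[K] M) := by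
  rw [LieModule.mem_maxTrivSubmodule] at ht ⊢
  intro x
  rw [← comm_lie, ht x, map_zero]

lemma finrank_eq_of_invariant [FiniteDimensional K M] [FiniteDimensional K N]
    (hMirr : ∀ P : LieSubmodule K L M, P = ⊥ ∨ P = ⊤)
    (hNirr : ∀ Q : LieSubmodule K L N, Q = ⊥ ∨ Q = ⊤)
    {t : M ⊗[K] N} (ht : t ∈ LieModule.maxTrivSubmodule K L (M ⊗[K] N)) (ht0 : t ≠ 0) :
    finrank K M = finrank K N := by
  have h1 : Function.Surjective (phiE K M N t) := phiE_surj hNirr ht ht0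
  have h2 : Function.Surjective (phiE K N M (TensorProduct.comm K M N t)) :=
    phiE_surj hMirr (comm_mem_maxTriv ht)
      (by simp [LinearEquiv.map_eq_zero_iff (TensorProduct.comm K M N), ht0])
  have d1 : finrank K N ≤ finrank K M := by
    have := LinearMap.finrank_range_le ((phiE K M N t : Module.Dual K M →ₗ[K] N))
    rwa [LinearMap.range_eq_top.mpr h1, finrank_top, Subspace.dual_finrank_eq] at this
  have d2 : finrank K M ≤ finrank K N := by
    have := LinearMap.finrank_range_le ((phiE K N M (TensorProduct.comm K M N t) :
      Module.Dual K N →ₗ[K] M))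
    rwa [LinearMap.range_eq_top.mpr h2, finrank_top, Subspace.dual_finrank_eq] at this
  exact le_antisymm d2 d1

lemma phiE_bij [FiniteDimensional K M] [FiniteDimensional K N]
    (hMirr : ∀ P : LieSubmodule K L M, P = ⊥ ∨ P = ⊤)
    (hNirr : ∀ Q : LieSubmodule K L N, Q = ⊥ ∨ Q = ⊤)
    {t : M ⊗[K] N} (ht : t ∈ LieModule.maxTrivSubmodule K L (M ⊗[K] N)) (ht0 : t ≠ 0) :
    Function.Bijective (phiE K M N t) := by
  have hs := phiE_surj hNirr ht ht0
  have hd : finrank K (Module.Dual K M) = finrank K N := by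
    rw [Subspace.dual_finrank_eq]
    exact finrank_eq_of_invariant hMirr hNirr ht ht0
  exact ⟨(LinearMap.injective_iff_surjective_of_finrank_eq_finrank hd).mpr hs, hs⟩

lemma phiE_symm_lie [FiniteDimensional K M] [FiniteDimensional K N]
    {t : M ⊗[K] N} (ht : t ∈ LieModule.maxTrivSubmodule K L (M ⊗[K] N))
    (e : Module.Dual K M ≃ₗ[K] N) (he : ∀ f, e f = phiE K M N t f)
    (x : L) (n : N) :
    e.symm ⁅x, n⁆ = -((e.symm n) ∘ₗ (LieModule.toEnd K L M x : M →ₗ[K] M)) := by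
  have hinv := (mem_maxTriv_iff t).mp ht
  apply e.injective
  rw [e.apply_symm_apply, he, map_neg]
  rw [neg_eq_of_add_eq_zero_right (hinv x (e.symm n)), ← he, e.apply_symm_apply]

end Aux

/-- Multiplicity of the trivial representation: for finite-dimensional irreducible Lie
modules `M`, `N` over an algebraically closed field, the maximal trivial submodule of
`M ⊗ N` (with the standard Lie module structure `⁅x, m ⊗ n⁆ = ⁅x,m⁆ ⊗ n + m ⊗ ⁅x,n⁆`)
is at most one-dimensional, and it is nonzero iff there is a nonzero invariant bilinear
form `M × N → K`. -/
theorem stmt_8 {K : Type*} [Field K] [IsAlgClosed K]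
    {L : Type*} [LieRing L] [LieAlgebra K L]
    {M N : Type*}
    [AddCommGroup M] [Module K M] [LieRingModule L M] [LieModule K L M]
    [AddCommGroup N] [Module K N] [LieRingModule L N] [LieModule K L N]
    [FiniteDimensional K M] [FiniteDimensional K N]
    (hMnt : Nontrivial M) (hNnt : Nontrivial N)
    (hMirr : ∀ P : LieSubmodule K L M, P = ⊥ ∨ P = ⊤)
    (hNirr : ∀ Q : LieSubmodule K L N, Q = ⊥ ∨ Q = ⊤) :
    (∀ (x : L) (m : M) (n : N),
      ⁅x, m ⊗ₜ[K] n⁆ = ⁅x, m⁆ ⊗ₜ[K] n + m ⊗ₜ[K] ⁅x, n⁆) ∧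
    Module.rank K ↥(LieModule.maxTrivSubmodule K L (M ⊗[K] N)) ≤ 1 ∧
    (LieModule.maxTrivSubmodule K L (M ⊗[K] N) ≠ ⊥ ↔
      ∃ B : M →ₗ[K] N →ₗ[K] K,
        (∀ (x : L) (m : M) (n : N), B ⁅x, m⁆ n + B m ⁅x, n⁆ = 0) ∧ B ≠ 0) := by
  set T := LieModule.maxTrivSubmodule K L (M ⊗[K] N) with hT
  -- proportionality: any two invariants are proportional
  have hprop : ∀ t ∈ T, t ≠ 0 → ∀ t' ∈ T, ∃ c : K, t' = c • t := by
    intro t ht ht0 t' ht'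
    set e : Module.Dual K M ≃ₗ[K] N :=
      LinearEquiv.ofBijective (phiE K M N t) (phiE_bij hMirr hNirr ht ht0) with he
    have heq : ∀ f, e f = phiE K M N t f := fun f => rfl
    set h : Module.End K N := (phiE K M N t' : Module.Dual K M →ₗ[K] N) ∘ₗ
      (e.symm : N →ₗ[K] Module.Dual K M) with hh
    have hinv' := (mem_maxTriv_iff t').mp ht'
    have hequiv : ∀ (x : L) (n : N), h ⁅x, n⁆ = ⁅x, h n⁆ := by
      intro x n
      have h1 : h ⁅x, n⁆ = phiE K M N t' (e.symm ⁅x, n⁆) := rfl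
      rw [h1, phiE_symm_lie ht e heq, map_neg,
        neg_eq_of_add_eq_zero_right (hinv' x (e.symm n))]
      rfl
    obtain ⟨c, hc⟩ := Module.End.exists_eigenvalue h
    obtain ⟨v, hv⟩ := hc.exists_hasEigenvector
    have hvmem : h v = c • v := hv.apply_eq_smul
    have hv0 : v ≠ 0 := hv.right
    -- kernel of h - c • id is a Lie submodule
    let P : LieSubmodule K L N :=
      { LinearMap.ker (h - c • (LinearMap.id : N →ₗ[K] N)) with
        lie_mem := by
          intro x n hn
          have hn' : h n = c • n := by
            simpa [sub_eq_zero] using hn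
          show ⁅x, n⁆ ∈ LinearMap.ker (h - c • (LinearMap.id : N →ₗ[K] N))
          rw [LinearMap.mem_ker, LinearMap.sub_apply, LinearMap.smul_apply,
            LinearMap.id_apply, sub_eq_zero, hequiv, hn', lie_smul] }
    have hPne : P ≠ ⊥ := by
      intro hP
      have : v ∈ P := by
        show v ∈ LinearMap.ker (h - c • (LinearMap.id : N →ₗ[K] N))
        rw [LinearMap.mem_ker, LinearMap.sub_apply, LinearMap.smul_apply,
          LinearMap.id_apply, sub_eq_zero, hvmem]
      rw [hP] at this
      exact hv0 (by simpa using this)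
    have hPtop : P = ⊤ := (hNirr P).resolve_left hPne
    have hall : ∀ n : N, h n = c • n := by
      intro n
      have : n ∈ P := by rw [hPtop]; exact LieSubmodule.mem_top n
      have hn' : n ∈ LinearMap.ker (h - c • (LinearMap.id : N →ₗ[K] N)) := this
      rw [LinearMap.mem_ker, LinearMap.sub_apply, LinearMap.smul_apply,
        LinearMap.id_apply, sub_eq_zero] at hn'
      exact hn'
    refine ⟨c, ?_⟩
    apply (phiE K M N).injective
    ext f
    have h2 : h (e f) = phiE K M N t' f := by
      show phiE K M N t' (e.symm (e f)) = _
      rw [e.symm_apply_apply]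
    rw [map_smul]
    rw [← h2, hall (e f)]
    rfl
  refine ⟨fun x m n => TensorProduct.LieModule.lie_tmul_right x m n, ?_, ?_, ?_⟩
  · -- rank ≤ 1
    by_cases hbot : T = ⊥
    · have hle : (T : Submodule K (M ⊗[K] N)) ≤ Submodule.span K ({0} : Set (M ⊗[K] N)) := by
        intro t' ht'
        have : t' = 0 := by rw [hbot] at ht'; simpa using ht'
        simp [this]
      refine le_trans (Submodule.rank_mono hle) ?_
      refine le_trans (rank_span_le _) ?_
      simp
    · obtain ⟨t, htmem, ht0⟩ : ∃ t ∈ T, t ≠ 0 := by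
        by_contra hcon
        push_neg at hcon
        exact hbot ((LieSubmodule.eq_bot_iff T).mpr hcon)
      have hle : (T : Submodule K (M ⊗[K] N)) ≤ Submodule.span K ({t} : Set (M ⊗[K] N)) := by
        intro t' ht'
        obtain ⟨c, hc⟩ := hprop t htmem ht0 t' ht'
        exact Submodule.mem_span_singleton.mpr ⟨c, hc.symm⟩
      refine le_trans (Submodule.rank_mono hle) (le_trans (rank_span_le _) ?_)
      simp
  · -- forward direction of the iff
    intro hne
    obtain ⟨t, htmem, ht0⟩ : ∃ t ∈ T, t ≠ 0 := by
      by_contra hcon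
      push_neg at hcon
      exact hne ((LieSubmodule.eq_bot_iff T).mpr hcon)
    set e : Module.Dual K M ≃ₗ[K] N :=
      LinearEquiv.ofBijective (phiE K M N t) (phiE_bij hMirr hNirr htmem ht0) with he
    have heq : ∀ f, e f = phiE K M N t f := fun f => rfl
    refine ⟨LinearMap.flip (e.symm : N →ₗ[K] Module.Dual K M), ?_, ?_⟩
    · intro x m n
      have h1 : e.symm ⁅x, n⁆
          = -((e.symm n) ∘ₗ (LieModule.toEnd K L M x : M →ₗ[K] M)) :=
        phiE_symm_lie htmem e heq x n
      show (e.symm n) ⁅x, m⁆ + (e.symm ⁅x, n⁆) m = 0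
      rw [h1]
      show (e.symm n) ⁅x, m⁆ + (-((e.symm n) ∘ₗ (LieModule.toEnd K L M x : M →ₗ[K] M))) m = 0
      simp [LieModule.toEnd_apply_apply]
    · intro hB0
      obtain ⟨n0, hn0⟩ := exists_ne (0 : N)
      have hf : e.symm n0 ≠ 0 := by
        intro h0
        apply hn0
        have := congrArg e h0
        rwa [e.apply_symm_apply, map_zero] at this
      obtain ⟨m0, hm0⟩ : ∃ m0, (e.symm n0) m0 ≠ 0 := by
        by_contra hcon
        push_neg at hcon
        exact hf (LinearMap.ext fun m => hcon m)
      apply hm0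
      have : (LinearMap.flip (e.symm : N →ₗ[K] Module.Dual K M)) m0 n0 = 0 := by
        rw [hB0]; rfl
      simpa using this
  · -- backward direction of the iff
    rintro ⟨B, hBinv, hB0⟩
    -- kernel of B is a Lie submodule of M
    let P : LieSubmodule K L M :=
      { LinearMap.ker B with
        lie_mem := by
          intro x m hm
          have hm' : B m = 0 := hm
          show ⁅x, m⁆ ∈ LinearMap.ker B
          rw [LinearMap.mem_ker]
          ext n
          have := hBinv x m n
          rw [hm'] at this
          simpa using this }
    have hPne : P ≠ ⊤ := by
      intro hPt
      apply hB0
      ext m n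
      have hm : m ∈ P := by rw [hPt]; exact LieSubmodule.mem_top m
      have hm' : B m = 0 := hm
      rw [hm']
      rfl
    have hBker : LinearMap.ker B = ⊥ := by
      have := (hMirr P).resolve_right hPne
      exact congrArg LieSubmodule.toSubmodule this
    have hBinj : Function.Injective B := LinearMap.ker_eq_bot.mp hBker
    -- kernel of B.flip is a Lie submodule of N
    let Q : LieSubmodule K L N :=
      { LinearMap.ker B.flip with
        lie_mem := by
          intro x n hn
          have hn' : B.flip n = 0 := hn
          show ⁅x, n⁆ ∈ LinearMap.ker B.flip
          rw [LinearMap.mem_ker]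
          ext m
          have := hBinv x m n
          have h2 : B ⁅x, m⁆ n = 0 := by
            have h3 : B.flip n ⁅x, m⁆ = 0 := by rw [hn']; rfl
            simpa using h3
          rw [h2] at this
          simpa using this }
    have hQne : Q ≠ ⊤ := by
      intro hQt
      apply hB0
      ext m n
      have hn : n ∈ Q := by rw [hQt]; exact LieSubmodule.mem_top n
      have hn' : B.flip n = 0 := hn
      have : B.flip n m = 0 := by rw [hn']; rfl
      simpa using this
    have hQker : LinearMap.ker B.flip = ⊥ := by
      have := (hNirr Q).resolve_right hQne
      exact congrArg LieSubmodule.toSubmodule this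
    have hFinj : Function.Injective B.flip := LinearMap.ker_eq_bot.mp hQker
    have hd1 : finrank K M ≤ finrank K N := by
      have := LinearMap.finrank_le_finrank_of_injective hBinj
      rwa [Subspace.dual_finrank_eq] at this
    have hd2 : finrank K N ≤ finrank K M := by
      have := LinearMap.finrank_le_finrank_of_injective hFinj
      rwa [Subspace.dual_finrank_eq] at this
    have hdual : finrank K N = finrank K (Module.Dual K M) := by
      rw [Subspace.dual_finrank_eq]
      exact le_antisymm hd2 hd1
    have hFbij : Function.Bijective B.flip :=
      ⟨hFinj, (LinearMap.injective_iff_surjective_of_finrank_eq_finrank hdual).mp hFinj⟩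
    set g : N ≃ₗ[K] Module.Dual K M := LinearEquiv.ofBijective B.flip hFbij with hg
    set t : M ⊗[K] N := (phiE K M N).symm (g.symm : Module.Dual K M →ₗ[K] N) with ht
    have hphit : ∀ f, phiE K M N t f = g.symm f := by
      intro f
      rw [ht, (phiE K M N).apply_symm_apply]
      rfl
    have htmem : t ∈ T := by
      rw [hT]
      rw [mem_maxTriv_iff]
      intro x f
      set n : N := g.symm f with hn
      have hfn : B.flip n = f := by
        rw [hn]
        exact g.apply_symm_apply f
      have hc : f ∘ₗ (LieModule.toEnd K L M x : M →ₗ[K] M) = B.flip (-⁅x, n⁆) := by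
        ext m
        have := hBinv x m n
        have h4 : f ⁅x, m⁆ = B ⁅x, m⁆ n := by rw [← hfn]; rfl
        simp only [LinearMap.coe_comp, Function.comp_apply, LieModule.toEnd_apply_apply,
          map_neg, LinearMap.neg_apply, LinearMap.flip_apply]
        rw [h4]
        exact eq_neg_of_add_eq_zero_left this
      rw [hphit, hphit, hc]
      have h5 : g.symm (B.flip (-⁅x, n⁆)) = -⁅x, n⁆ := by
        have : g (-⁅x, n⁆) = B.flip (-⁅x, n⁆) := rfl
        rw [← this, g.symm_apply_apply]
      rw [h5, ← hn]
      abel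
    have ht0 : t ≠ 0 := by
      intro h0
      obtain ⟨n0, hn0⟩ := exists_ne (0 : N)
      have : phiE K M N t (g n0) = n0 := by
        rw [hphit, g.symm_apply_apply]
      rw [h0, map_zero] at this
      exact hn0 (by simpa using this.symm)
    intro hbot
    rw [hbot] at htmem
    exact ht0 (by simpa using htmem)
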